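/- Let 0 ≤ p ≤ 1 and let N be the qubit amplitude damping channel with Kraus operators K₀ = [[1,0],[0,√(1−p)]] and K₁ = [[0,√p],[0,0]]. Then the maximum entanglement fidelity O(N) = 1 − p/2, and this value is attained by the input density matrix Λ = v v†/(2 − p), where v = vec(K₀) = e₀⊗e₀ + √(1−p)·e₁⊗e₁ ∈ ℂ²⊗ℂ². -/

import Mathlib

/-
By the vectorisation identity `(1 ⊗ B) vec 1 = vec B`, the entanglement fidelity of a channel
with Kraus operators `Kᵢ` on `ℂⁿ` is `(1/n) Σᵢ ⟨vec Kᵢᴴ, ρ vec Kᵢᴴ⟩`. For amplitude damping this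
is `½ (⟨v, ρ v⟩ + p ρ₀₁,₀₁)` with `v = vec K₀`. The vector `a = -√(1-p) e₀₀ + e₁₁` is orthogonal
to `v` and has the same squared length `2 - p`, so `⟨v, ρ v⟩ + ⟨a, ρ a⟩ = (2 - p)(ρ₀₀,₀₀ + ρ₁₁,₁₁)`.
Dropping `⟨a, ρ a⟩ ≥ 0` and using `p ≤ 2 - p` bounds the fidelity by `(1 - p/2) tr ρ`, with
equality for the normalised projection onto `v`.
-/

open Matrix
open scoped Kronecker ComplexOrder

/-- The maximally entangled unit vector `φ = (1/√d) Σ_a e_a ⊗ e_a`. -/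
noncomputable def maxEnt (n : Type*) [Fintype n] [DecidableEq n] : n × n → ℂ :=
  fun p => if p.1 = p.2 then ((1 / Real.sqrt (Fintype.card n) : ℝ) : ℂ) else 0

/-- The output `(id ⊗ N)(ρ) = Σ_i (I ⊗ K_i) ρ (I ⊗ K_i)†` of one half of `ρ`
through the channel with Kraus operators `K`. -/
noncomputable def chanOut {n : Type*} [Fintype n] [DecidableEq n] {ι : Type*} [Fintype ι]
    (K : ι → Matrix n n ℂ) (ρ : Matrix (n × n) (n × n) ℂ) : Matrix (n × n) (n × n) ℂ :=
  ∑ i, ((1 : Matrix n n ℂ) ⊗ₖ K i) * ρ * ((1 : Matrix n n ℂ) ⊗ₖ K i)ᴴ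

/-- The entanglement fidelity `⟨φ, ((id⊗N)(ρ)) φ⟩`. -/
noncomputable def fid {n : Type*} [Fintype n] [DecidableEq n] {ι : Type*} [Fintype ι]
    (K : ι → Matrix n n ℂ) (ρ : Matrix (n × n) (n × n) ℂ) : ℂ :=
  star (maxEnt n) ⬝ᵥ (chanOut K ρ *ᵥ maxEnt n)

/-- A density matrix: positive semidefinite with unit trace. -/
def IsDensity {m : Type*} [Fintype m] (ρ : Matrix m m ℂ) : Prop :=
  ρ.PosSemidef ∧ ρ.trace = 1

/-- The set of (real) entanglement fidelity values achievable with density-matrix inputs;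
its supremum is the maximum entanglement fidelity `O(N)`. -/
noncomputable def fidSet {n : Type*} [Fintype n] [DecidableEq n] {ι : Type*} [Fintype ι]
    (K : ι → Matrix n n ℂ) : Set ℝ :=
  {x : ℝ | ∃ ρ : Matrix (n × n) (n × n) ℂ, IsDensity ρ ∧ fid K ρ = (x : ℂ)}

section General

variable {n : Type*} [Fintype n]

lemma star_dotProduct_mul_mul_conjTranspose_mulVec {m : Type*} [Fintype m]
    (A : Matrix n m ℂ) (ρ : Matrix m m ℂ) (x : n → ℂ) :
    star x ⬝ᵥ (A * ρ * Aᴴ) *ᵥ x = star (Aᴴ *ᵥ x) ⬝ᵥ ρ *ᵥ (Aᴴ *ᵥ x) := by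
  rw [← mulVec_mulVec, ← mulVec_mulVec, dotProduct_mulVec, star_mulVec,
    conjTranspose_conjTranspose]

lemma star_smul_dotProduct_mulVec_smul (ρ : Matrix n n ℂ) (c : ℂ) (x : n → ℂ) :
    star (c • x) ⬝ᵥ ρ *ᵥ (c • x) = star c * c * (star x ⬝ᵥ ρ *ᵥ x) := by
  rw [mulVec_smul, star_smul, smul_dotProduct, dotProduct_smul, smul_eq_mul, smul_eq_mul,
    mul_assoc]

variable [DecidableEq n]

lemma maxEnt_eq_smul_vec_one :
    maxEnt n = ((1 / Real.sqrt (Fintype.card n) : ℝ) : ℂ) • vec (1 : Matrix n n ℂ) := by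
  ext ⟨i, j⟩
  by_cases h : i = j <;> simp [maxEnt, vec, one_apply, h, eq_comm]

theorem fid_eq_inv_card_mul_sum {ι : Type*} [Fintype ι] (K : ι → Matrix n n ℂ)
    (ρ : Matrix (n × n) (n × n) ℂ) :
    fid K ρ = (Fintype.card n : ℂ)⁻¹ * ∑ i, star (vec (K i)ᴴ) ⬝ᵥ ρ *ᵥ vec (K i)ᴴ := by
  have hc : star ((1 / Real.sqrt (Fintype.card n) : ℝ) : ℂ) *
      ((1 / Real.sqrt (Fintype.card n) : ℝ) : ℂ) = (Fintype.card n : ℂ)⁻¹ := by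
    rw [Complex.star_def, Complex.conj_ofReal, ← Complex.ofReal_mul, ← sq, div_pow,
      Real.sq_sqrt (Nat.cast_nonneg _)]
    simp
  rw [fid, chanOut, sum_mulVec, dotProduct_sum, Finset.mul_sum]
  refine Finset.sum_congr rfl fun i _ => ?_
  rw [star_dotProduct_mul_mul_conjTranspose_mulVec, conjTranspose_kronecker, conjTranspose_one,
    maxEnt_eq_smul_vec_one, mulVec_smul, ← vec_mul_eq_mulVec, Matrix.mul_one,
    star_smul_dotProduct_mulVec_smul, hc]

end General

section RankOne

variable {m : Type*} [Fintype m] [DecidableEq m]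

lemma star_single_dotProduct_mulVec_single (ρ : Matrix m m ℂ) (i : m) (x : ℂ) :
    star (Pi.single i x) ⬝ᵥ ρ *ᵥ Pi.single i x = star x * x * ρ i i := by
  rw [mulVec_single, ← Pi.single_star, single_dotProduct, Pi.smul_apply, op_smul_eq_mul,
    col_apply]
  ring

lemma star_dotProduct_mulVec_single_add_single (ρ : Matrix m m ℂ) (i j : m) (x y : ℂ) :
    star (Pi.single i x + Pi.single j y) ⬝ᵥ ρ *ᵥ (Pi.single i x + Pi.single j y) =
      star x * x * ρ i i + star x * y * ρ i j + star y * x * ρ j i + star y * y * ρ j j := by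
  simp only [star_add, ← Pi.single_star, mulVec_add, mulVec_single, add_dotProduct,
    single_dotProduct, Pi.add_apply, Pi.smul_apply, op_smul_eq_mul, col_apply]
  ring

/-- `(x, y)` and `(-ȳ, x̄)` are orthogonal and of equal length. -/
lemma star_dotProduct_mulVec_single_add_single_add_rotate (ρ : Matrix m m ℂ) (i j : m)
    (x y : ℂ) :
    star (Pi.single i x + Pi.single j y) ⬝ᵥ ρ *ᵥ (Pi.single i x + Pi.single j y) +
      star (Pi.single i (-star y) + Pi.single j (star x)) ⬝ᵥ
        ρ *ᵥ (Pi.single i (-star y) + Pi.single j (star x)) =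
      (star x * x + star y * y) * (ρ i i + ρ j j) := by
  simp only [star_dotProduct_mulVec_single_add_single, star_neg, star_star]
  ring

omit [DecidableEq m] in
lemma star_dotProduct_vecMulVec_mulVec (w u : m → ℂ) :
    star u ⬝ᵥ vecMulVec w (star w) *ᵥ u = (star u ⬝ᵥ w) * (star w ⬝ᵥ u) := by
  rw [dotProduct_mulVec, vecMul_vecMulVec, smul_dotProduct, smul_eq_mul]

omit [DecidableEq m] in
lemma isDensity_inv_smul_vecMulVec {w : m → ℂ} (hw : w ≠ 0) :
    IsDensity ((star w ⬝ᵥ w)⁻¹ • vecMulVec w (star w)) := by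
  refine ⟨(posSemidef_vecMulVec_self_star w).smul
    (inv_nonneg_of_nonneg (dotProduct_star_self_nonneg w)), ?_⟩
  rw [trace_smul, trace_vecMulVec, dotProduct_comm w, smul_eq_mul,
    inv_mul_cancel₀ (dotProduct_star_self_eq_zero.not.mpr hw)]

end RankOne

section AmplitudeDamping

variable (p : ℝ)

noncomputable def ampDampKraus : Fin 2 → Matrix (Fin 2) (Fin 2) ℂ :=
  ![!![1, 0; 0, (Real.sqrt (1 - p) : ℂ)], !![0, (Real.sqrt p : ℂ); 0, 0]]

noncomputable def ampDampVec : Fin 2 × Fin 2 → ℂ :=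
  Pi.single (0, 0) 1 + Pi.single (1, 1) (Real.sqrt (1 - p) : ℂ)

lemma ampDampVec_eq_ite : ampDampVec p = fun q => if q.1 = 0 ∧ q.2 = 0 then 1
    else if q.1 = 1 ∧ q.2 = 1 then (Real.sqrt (1 - p) : ℂ) else 0 := by
  ext ⟨a, b⟩
  fin_cases a <;> fin_cases b <;> simp [ampDampVec]

lemma fid_ampDampKraus (ρ : Matrix (Fin 2 × Fin 2) (Fin 2 × Fin 2) ℂ) :
    fid (ampDampKraus p) ρ = 2⁻¹ * (star (ampDampVec p) ⬝ᵥ ρ *ᵥ ampDampVec p +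
      star (Pi.single (0, 1) (Real.sqrt p : ℂ)) ⬝ᵥ ρ *ᵥ Pi.single (0, 1) (Real.sqrt p : ℂ)) := by
  have h0 : vec (ampDampKraus p 0)ᴴ = ampDampVec p := by
    ext ⟨a, b⟩
    fin_cases a <;> fin_cases b <;> simp [ampDampKraus, ampDampVec]
  have h1 : vec (ampDampKraus p 1)ᴴ = Pi.single (0, 1) (Real.sqrt p : ℂ) := by
    ext ⟨a, b⟩
    fin_cases a <;> fin_cases b <;> simp [ampDampKraus]
  rw [fid_eq_inv_card_mul_sum, Fin.sum_univ_two, h0, h1]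
  norm_num

variable {p}

lemma ampDampVec_ne_zero : ampDampVec p ≠ 0 := fun h => by
  simpa [ampDampVec] using congr_fun h (0, 0)

lemma star_ampDampVec_dotProduct_self (hp1 : p ≤ 1) :
    star (ampDampVec p) ⬝ᵥ ampDampVec p = ((2 - p : ℝ) : ℂ) := by
  simp [ampDampVec, dotProduct, Fintype.sum_prod_type, Pi.single_apply, ← Complex.ofReal_mul,
    Real.mul_self_sqrt (sub_nonneg.mpr hp1)]
  ring

variable (p) in
noncomputable def ampDampState : Matrix (Fin 2 × Fin 2) (Fin 2 × Fin 2) ℂ :=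
  (star (ampDampVec p) ⬝ᵥ ampDampVec p)⁻¹ • vecMulVec (ampDampVec p) (star (ampDampVec p))

lemma isDensity_ampDampState : IsDensity (ampDampState p) :=
  isDensity_inv_smul_vecMulVec ampDampVec_ne_zero

lemma fid_ampDampKraus_ampDampState (hp1 : p ≤ 1) :
    fid (ampDampKraus p) (ampDampState p) = ((1 - p / 2 : ℝ) : ℂ) := by
  have hv : star (ampDampVec p) ⬝ᵥ ampDampVec p ≠ 0 :=
    dotProduct_star_self_eq_zero.not.mpr ampDampVec_ne_zero
  have h01 : ampDampVec p (0, 1) = 0 := by simp [ampDampVec]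
  rw [ampDampState, fid_ampDampKraus, smul_mulVec, smul_mulVec, dotProduct_smul, dotProduct_smul,
    star_dotProduct_vecMulVec_mulVec, star_dotProduct_vecMulVec_mulVec, ← Pi.single_star,
    single_dotProduct, h01, smul_eq_mul, smul_eq_mul]
  field_simp
  rw [star_ampDampVec_dotProduct_self hp1]
  push_cast
  ring

lemma fid_ampDampKraus_le (hp0 : 0 ≤ p) (hp1 : p ≤ 1)
    {ρ : Matrix (Fin 2 × Fin 2) (Fin 2 × Fin 2) ℂ} (hρ : IsDensity ρ) :
    fid (ampDampKraus p) ρ ≤ ((1 - p / 2 : ℝ) : ℂ) := by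
  obtain ⟨hpsd, htr⟩ := hρ
  set s : ℂ := (Real.sqrt (1 - p) : ℂ)
  have hs : star s * s = 1 - (p : ℂ) := by
    rw [Complex.star_def, Complex.conj_ofReal, ← Complex.ofReal_mul,
      Real.mul_self_sqrt (sub_nonneg.mpr hp1)]
    push_cast; ring
  have ht : star (Real.sqrt p : ℂ) * (Real.sqrt p : ℂ) = p := by
    rw [Complex.star_def, Complex.conj_ofReal, ← Complex.ofReal_mul, Real.mul_self_sqrt hp0]
  set a : Fin 2 × Fin 2 → ℂ := Pi.single (0, 0) (-star s) + Pi.single (1, 1) (star 1)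
  have hrot : star (ampDampVec p) ⬝ᵥ ρ *ᵥ ampDampVec p + star a ⬝ᵥ ρ *ᵥ a =
      (2 - p) * (ρ (0, 0) (0, 0) + ρ (1, 1) (1, 1)) := by
    rw [ampDampVec, star_dotProduct_mulVec_single_add_single_add_rotate, star_one, one_mul, hs]
    ring
  have htrace : ρ (0, 0) (0, 0) + ρ (0, 1) (0, 1) + ρ (1, 0) (1, 0) + ρ (1, 1) (1, 1) = 1 := by
    simpa [trace, Fintype.sum_prod_type, add_assoc] using htr
  have hgap : ((1 - p / 2 : ℝ) : ℂ) - fid (ampDampKraus p) ρ = 2⁻¹ * (star a ⬝ᵥ ρ *ᵥ a) +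
      ((1 - p : ℝ) : ℂ) * ρ (0, 1) (0, 1) + ((1 - p / 2 : ℝ) : ℂ) * ρ (1, 0) (1, 0) := by
    rw [fid_ampDampKraus, star_single_dotProduct_mulVec_single, ht]
    push_cast
    linear_combination (-1 / 2 : ℂ) * hrot - (1 - (p : ℂ) / 2) * htrace
  rw [← sub_nonneg, hgap]
  have hcoeff {r : ℝ} (hr : 0 ≤ r) : (0 : ℂ) ≤ r := Complex.zero_le_real.mpr hr
  refine add_nonneg (add_nonneg (mul_nonneg ?_ (hpsd.dotProduct_mulVec_nonneg a))
    (mul_nonneg (hcoeff (by linarith)) hpsd.diag_nonneg))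
    (mul_nonneg (hcoeff (by linarith)) hpsd.diag_nonneg)
  simp

end AmplitudeDamping

theorem stmt_6 (p : ℝ) (hp0 : 0 ≤ p) (hp1 : p ≤ 1)
    (K : Fin 2 → Matrix (Fin 2) (Fin 2) ℂ)
    (hK : K = ![!![1, 0; 0, (Real.sqrt (1 - p) : ℂ)], !![0, (Real.sqrt p : ℂ); 0, 0]])
    (v : Fin 2 × Fin 2 → ℂ)
    (hv : v = fun q => if q.1 = 0 ∧ q.2 = 0 then 1
      else if q.1 = 1 ∧ q.2 = 1 then (Real.sqrt (1 - p) : ℂ) else 0)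
    (Λ : Matrix (Fin 2 × Fin 2) (Fin 2 × Fin 2) ℂ)
    (hΛ : Λ = (((2 - p : ℝ) : ℂ))⁻¹ • Matrix.vecMulVec v (star v)) :
    IsGreatest (fidSet K) (1 - p / 2) ∧ IsDensity Λ ∧
      fid K Λ = ((1 - p / 2 : ℝ) : ℂ) := by
  obtain rfl : K = ampDampKraus p := hK
  obtain rfl : v = ampDampVec p := hv.trans (ampDampVec_eq_ite p).symm
  obtain rfl : Λ = ampDampState p := by
    rw [hΛ, ampDampState, star_ampDampVec_dotProduct_self hp1]
  have hfid := fid_ampDampKraus_ampDampState hp1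
  refine ⟨⟨⟨_, isDensity_ampDampState, hfid⟩, ?_⟩, isDensity_ampDampState, hfid⟩
  rintro x ⟨ρ, hρ, hx⟩
  exact Complex.real_le_real.mp (hx ▸ fid_ampDampKraus_le hp0 hp1 hρ)
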